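/- arXiv:1711.09387 — 2 statements merged into one kernel-verified Lean document; each statement's English description precedes it below -/
import Mathlib

section
/- Functoriality of the Deligne splitting: let f : V → V' be a morphism of mixed Hodge structures (V, W, F) → (V', W', F'), and let (I^{p,q}) and (I'^{p,q}) be the Deligne splittings of V_ℂ and V'_ℂ respectively (the unique bigradings satisfying (W_n)_ℂ = ⊕_{p+q≤n} I^{p,q}, F^p = ⊕_{r≥p} I^{r,s}, and I^{p,q} ≡ σ(I^{q,p}) modulo ⊕_{r<p,s<q} I^{r,s}). Then f_ℂ(I^{p,q}) ⊆ I'^{p,q} for all (p,q). -/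
open scoped TensorProduct

private lemma sigmaC_aux (V : Type*) [AddCommGroup V] [Module ℝ V] (c : ℂ) (x : ℂ ⊗[ℝ] V) :
    TensorProduct.map Complex.conjAe.toLinearMap LinearMap.id (c • x) =
      (starRingEnd ℂ) c • TensorProduct.map Complex.conjAe.toLinearMap LinearMap.id x := by
  induction x using TensorProduct.induction_on with
  | zero => simp
  | tmul z v => simp [TensorProduct.smul_tmul', smul_eq_mul, map_mul]
  | add x y hx hy => simp only [smul_add, map_add, hx, hy]

/-- The conjugation involution `σ` of the complexification `ℂ ⊗[ℝ] V`,
as a `conj`-semilinear map. -/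
noncomputable def sigmaC (V : Type*) [AddCommGroup V] [Module ℝ V] :
    (ℂ ⊗[ℝ] V) →ₛₗ[starRingEnd ℂ] (ℂ ⊗[ℝ] V) where
  toFun := TensorProduct.map Complex.conjAe.toLinearMap LinearMap.id
  map_add' x y := map_add _ x y
  map_smul' c x := sigmaC_aux V c x

/-- A mixed Hodge structure on a real vector space `V`: an increasing, bounded, exhaustive
weight filtration `W` of `V` by real subspaces and a decreasing, bounded, exhaustive Hodge
filtration `F` of `V_ℂ = ℂ ⊗[ℝ] V` by complex subspaces, such that for every `n` the
filtration induced by `F` on `Gr^W_n = W_n / W_{n-1}` is a Hodge filtration of weight `n`.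

Identifying the complexification of `Gr^W_n` with `(W_n)_ℂ / (W_{n-1})_ℂ` (where
`(W_n)_ℂ := (W n).baseChange ℂ ⊆ V_ℂ`), the Hodge filtration condition of weight `n` on
`Gr^W_n` — namely `F^p(Gr^W_n)_ℂ ⊕ σ(F^{n-p+1}(Gr^W_n)_ℂ) = (Gr^W_n)_ℂ` for all `p`, where
`F^p(Gr^W_n)_ℂ` is the image of `F^p ⊓ (W_n)_ℂ` — is expressed below by pulling back along
the quotient map `(W_n)_ℂ → (W_n)_ℂ / (W_{n-1})_ℂ`: the first displayed equation is the
disjointness of the two images in the quotient, the second their spanning of the quotient. -/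
def IsMixedHodgeStructure (V : Type*) [AddCommGroup V] [Module ℝ V]
    (W : ℤ → Submodule ℝ V) (F : ℤ → Submodule ℂ (ℂ ⊗[ℝ] V)) : Prop :=
  Monotone W ∧
  (∃ a : ℤ, ∀ n ≤ a, W n = ⊥) ∧
  (∃ b : ℤ, ∀ n ≥ b, W n = ⊤) ∧
  (∀ p : ℤ, F (p + 1) ≤ F p) ∧
  (∃ a : ℤ, ∀ p ≤ a, F p = ⊤) ∧
  (∃ b : ℤ, ∀ p ≥ b, F p = ⊥) ∧
  (∀ n p : ℤ,
    ((F p ⊓ (W n).baseChange ℂ) ⊔ (W (n - 1)).baseChange ℂ) ⊓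
        (((F (n - p + 1) ⊓ (W n).baseChange ℂ).map (sigmaC V)) ⊔ (W (n - 1)).baseChange ℂ)
      = (W (n - 1)).baseChange ℂ ∧
    (F p ⊓ (W n).baseChange ℂ) ⊔ ((F (n - p + 1) ⊓ (W n).baseChange ℂ).map (sigmaC V))
        ⊔ (W (n - 1)).baseChange ℂ
      = (W n).baseChange ℂ)

/-- The Deligne splitting conditions for a bigrading `I^{p,q}` of `V_ℂ` attached to a mixed
Hodge structure `(W, F)`: (i) `V_ℂ = ⊕ I^{p,q}`; (ii) `(W_n)_ℂ = ⊕_{p+q≤n} I^{p,q}`;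
(iii) `F^p = ⊕_{r≥p} I^{r,s}`; (iv) `I^{p,q} ≡ σ(I^{q,p})` modulo `⊕_{r<p,s<q} I^{r,s}`,
i.e. their images in the quotient of `V_ℂ` by `⊕_{r<p,s<q} I^{r,s}` coincide. -/
def IsDeligneSplitting (V : Type*) [AddCommGroup V] [Module ℝ V]
    (W : ℤ → Submodule ℝ V) (F : ℤ → Submodule ℂ (ℂ ⊗[ℝ] V))
    (I : ℤ × ℤ → Submodule ℂ (ℂ ⊗[ℝ] V)) : Prop :=
  DirectSum.IsInternal I ∧
  (∀ n : ℤ, (W n).baseChange ℂ = ⨆ (pq : ℤ × ℤ) (_ : pq.1 + pq.2 ≤ n), I pq) ∧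
  (∀ p : ℤ, F p = ⨆ (pq : ℤ × ℤ) (_ : p ≤ pq.1), I pq) ∧
  (∀ p q : ℤ,
    (I (p, q)).map (⨆ (pq : ℤ × ℤ) (_ : pq.1 < p ∧ pq.2 < q), I pq).mkQ =
      ((I (q, p)).map (sigmaC V)).map
        (⨆ (pq : ℤ × ℤ) (_ : pq.1 < p ∧ pq.2 < q), I pq).mkQ)

/-!
Deligne's splitting is given by an explicit formula in terms of `W`, `F` and `σ`:
`I^{p,q} = F^p ∩ (W_{p+q})_ℂ ∩ (σF^q ∩ (W_{p+q})_ℂ + Σ_{j ≥ 2} σF^{q-j+1} ∩ (W_{p+q-j})_ℂ)`.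
The inclusion `⊆` follows from `I^{p,q} ⊆ σ(I^{q,p}) + Σ_{r<p,s<q} I^{r,s}` by induction on
`p + q`, which starts because `W` vanishes in low weights; the inclusion `⊇` by expanding both
sides in the bigrading. Every ingredient of the formula is preserved by a morphism of mixed Hodge
structures, since `f_ℂ` commutes with `σ`.
-/

open Submodule

lemma iSupIndep.biSup_inf_biSup {α ι : Type*} [CompleteLattice α] [IsModularLattice α]
    [IsCompactlyGenerated α] {f : ι → α} (hf : iSupIndep f) (s t : Set ι) :
    (⨆ i ∈ s, f i) ⊓ (⨆ i ∈ t, f i) = ⨆ i ∈ s ∩ t, f i := by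
  have hsplit : ⨆ i ∈ s, f i = (⨆ i ∈ s ∩ t, f i) ⊔ ⨆ i ∈ s \ t, f i := by
    rw [← iSup_union, Set.inter_union_sdiff]
  rw [hsplit, sup_inf_assoc_of_le _ (biSup_mono fun _ hi => hi.2),
    (hf.disjoint_biSup_biSup Set.disjoint_sdiff_left).eq_bot, sup_bot_eq]

lemma Submodule.map_baseChange_le_baseChange {R A M N : Type*} [CommSemiring R] [CommSemiring A]
    [Algebra R A] [AddCommMonoid M] [Module R M] [AddCommMonoid N] [Module R N]
    {f : M →ₗ[R] N} {U : Submodule R M} {U' : Submodule R N} (h : U.map f ≤ U') :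
    (U.baseChange A).map (f.baseChange A) ≤ U'.baseChange A := by
  rw [map_le_iff_le_comap, baseChange_eq_span, span_le]
  rintro - ⟨u, hu, rfl⟩
  exact tmul_mem_baseChange_of_mem 1 (h ⟨u, hu, rfl⟩)

section Conjugation

variable {V V' : Type*} [AddCommGroup V] [Module ℝ V] [AddCommGroup V'] [Module ℝ V']

@[simp]
lemma sigmaC_tmul (z : ℂ) (v : V) : sigmaC V (z ⊗ₜ[ℝ] v) = (starRingEnd ℂ) z ⊗ₜ[ℝ] v :=
  rfl

lemma sigmaC_involutive : Function.Involutive (sigmaC V) := fun x => by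
  induction x using TensorProduct.induction_on with
  | zero => simp
  | tmul z v => simp
  | add x y hx hy => simp only [map_add, hx, hy]

lemma baseChange_sigmaC (f : V →ₗ[ℝ] V') (x : ℂ ⊗[ℝ] V) :
    f.baseChange ℂ (sigmaC V x) = sigmaC V' (f.baseChange ℂ x) := by
  induction x using TensorProduct.induction_on with
  | zero => simp
  | tmul z v => simp
  | add x y hx hy => simp only [map_add, hx, hy]

lemma map_sigmaC_inf (X Y : Submodule ℂ (ℂ ⊗[ℝ] V)) :
    (X ⊓ Y).map (sigmaC V) = X.map (sigmaC V) ⊓ Y.map (sigmaC V) :=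
  map_inf _ sigmaC_involutive.injective

lemma map_sigmaC_baseChange (U : Submodule ℝ V) :
    (U.baseChange ℂ).map (sigmaC V) = U.baseChange ℂ := by
  have hle : (U.baseChange ℂ).map (sigmaC V) ≤ U.baseChange ℂ := by
    rw [map_le_iff_le_comap]
    conv_lhs => rw [baseChange_eq_span]
    rw [span_le]
    rintro - ⟨u, hu, rfl⟩
    simpa using tmul_mem_baseChange_of_mem (1 : ℂ) hu
  exact le_antisymm hle fun x hx => ⟨sigmaC V x, hle ⟨x, hx, rfl⟩, sigmaC_involutive x⟩

lemma map_map_sigmaC_le {f : V →ₗ[ℝ] V'} {X : Submodule ℂ (ℂ ⊗[ℝ] V)}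
    {X' : Submodule ℂ (ℂ ⊗[ℝ] V')} (h : X.map (f.baseChange ℂ) ≤ X') :
    (X.map (sigmaC V)).map (f.baseChange ℂ) ≤ X'.map (sigmaC V') := by
  rintro - ⟨-, ⟨x, hx, rfl⟩, rfl⟩
  exact ⟨f.baseChange ℂ x, h ⟨x, hx, rfl⟩, (baseChange_sigmaC f x).symm⟩

end Conjugation

section Formula

variable {V V' : Type*} [AddCommGroup V] [Module ℝ V] [AddCommGroup V'] [Module ℝ V']

noncomputable def deligneTail (W : ℤ → Submodule ℝ V) (F : ℤ → Submodule ℂ (ℂ ⊗[ℝ] V))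
    (p q : ℤ) : Submodule ℂ (ℂ ⊗[ℝ] V) :=
  ⨆ (j : ℤ) (_ : 2 ≤ j), (F (q - j + 1)).map (sigmaC V) ⊓ (W (p + q - j)).baseChange ℂ

noncomputable def deligneConjPart (W : ℤ → Submodule ℝ V) (F : ℤ → Submodule ℂ (ℂ ⊗[ℝ] V))
    (p q : ℤ) : Submodule ℂ (ℂ ⊗[ℝ] V) :=
  (F q).map (sigmaC V) ⊓ (W (p + q)).baseChange ℂ ⊔ deligneTail W F p q

noncomputable def deligneSubspace (W : ℤ → Submodule ℝ V) (F : ℤ → Submodule ℂ (ℂ ⊗[ℝ] V))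
    (p q : ℤ) : Submodule ℂ (ℂ ⊗[ℝ] V) :=
  F p ⊓ (W (p + q)).baseChange ℂ ⊓ deligneConjPart W F p q

lemma deligneConjPart_le_deligneTail {W : ℤ → Submodule ℝ V} {F : ℤ → Submodule ℂ (ℂ ⊗[ℝ] V)}
    (hF : Antitone F) {p q r s : ℤ} (hr : r < p) (hs : s < q) :
    deligneConjPart W F r s ≤ deligneTail W F p q := by
  have hterm : ∀ {t m j : ℤ}, 2 ≤ j → q - j + 1 ≤ t → m = p + q - j →
      (F t).map (sigmaC V) ⊓ (W m).baseChange ℂ ≤ deligneTail W F p q :=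
    fun hj ht hm => le_iSup₂_of_le _ hj (inf_le_inf (map_mono (hF ht)) (hm ▸ le_rfl))
  exact sup_le (hterm (j := p + q - (r + s)) (by omega) (by omega) (by omega))
    (iSup₂_le fun j hj => hterm (j := j + (p + q - (r + s))) (by omega) (by omega) (by omega))

theorem map_deligneSubspace_le {W : ℤ → Submodule ℝ V} {F : ℤ → Submodule ℂ (ℂ ⊗[ℝ] V)}
    {W' : ℤ → Submodule ℝ V'} {F' : ℤ → Submodule ℂ (ℂ ⊗[ℝ] V')} (f : V →ₗ[ℝ] V')
    (hfW : ∀ n, (W n).map f ≤ W' n) (hfF : ∀ p, (F p).map (f.baseChange ℂ) ≤ F' p) (p q : ℤ) :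
    (deligneSubspace W F p q).map (f.baseChange ℂ) ≤ deligneSubspace W' F' p q := by
  have hW n := map_baseChange_le_baseChange (A := ℂ) (hfW n)
  have hconj : ∀ t m, ((F t).map (sigmaC V) ⊓ (W m).baseChange ℂ).map (f.baseChange ℂ) ≤
      (F' t).map (sigmaC V') ⊓ (W' m).baseChange ℂ :=
    fun t m => (map_inf_le _).trans (inf_le_inf (map_map_sigmaC_le (hfF t)) (hW m))
  refine (map_inf_le _).trans (inf_le_inf ((map_inf_le _).trans (inf_le_inf (hfF p) (hW _))) ?_)
  simp only [deligneConjPart, deligneTail, Submodule.map_sup, Submodule.map_iSup]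
  exact sup_le_sup (hconj _ _) (iSup₂_mono fun j _ => hconj _ _)

end Formula

namespace IsDeligneSplitting

variable {V : Type*} [AddCommGroup V] [Module ℝ V] {W : ℤ → Submodule ℝ V}
  {F : ℤ → Submodule ℂ (ℂ ⊗[ℝ] V)} {I : ℤ × ℤ → Submodule ℂ (ℂ ⊗[ℝ] V)}
  (hI : IsDeligneSplitting V W F I)
include hI

lemma le_F (p q : ℤ) : I (p, q) ≤ F p := by
  rw [hI.2.2.1]
  exact le_iSup₂_of_le (p, q) le_rfl le_rfl

lemma le_W (p q : ℤ) : I (p, q) ≤ (W (p + q)).baseChange ℂ := by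
  rw [hI.2.1]
  exact le_iSup₂_of_le (p, q) le_rfl le_rfl

lemma antitone_F : Antitone F := fun p p' h => by
  rw [hI.2.2.1, hI.2.2.1]
  exact biSup_mono fun _ hpq => h.trans hpq

lemma lower_sup_eq (p q : ℤ) :
    (⨆ (pq : ℤ × ℤ) (_ : pq.1 < p ∧ pq.2 < q), I pq) ⊔ I (p, q) =
      (⨆ (pq : ℤ × ℤ) (_ : pq.1 < p ∧ pq.2 < q), I pq) ⊔ (I (q, p)).map (sigmaC V) := by
  have h := congrArg (comap (⨆ (pq : ℤ × ℤ) (_ : pq.1 < p ∧ pq.2 < q), I pq).mkQ) (hI.2.2.2 p q)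
  rwa [comap_map_mkQ, comap_map_mkQ] at h

lemma F_inf_W_eq (p n : ℤ) :
    F p ⊓ (W n).baseChange ℂ = ⨆ (pq : ℤ × ℤ) (_ : p ≤ pq.1 ∧ pq.1 + pq.2 ≤ n), I pq := by
  rw [hI.2.2.1, hI.2.1]
  exact hI.1.submodule_iSupIndep.biSup_inf_biSup {pq | p ≤ pq.1} {pq | pq.1 + pq.2 ≤ n}

lemma map_sigmaC_F_inf_W_le (t m : ℤ) :
    (F t).map (sigmaC V) ⊓ (W m).baseChange ℂ ≤
      ⨆ (ab : ℤ × ℤ) (_ : ab.1 + ab.2 ≤ m ∧ (t ≤ ab.2 ∨ ab.1 + t < m)), I ab := by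
  rw [← map_sigmaC_baseChange (W m), ← map_sigmaC_inf, hI.F_inf_W_eq]
  simp only [Submodule.map_iSup]
  refine iSup₂_le fun ⟨r, s⟩ ⟨hr, hrs⟩ => ?_
  dsimp only at hr hrs
  refine le_sup_right.trans ((hI.lower_sup_eq s r).ge.trans (sup_le ?_ ?_))
  · exact biSup_mono fun ab hab => by omega
  · exact le_iSup₂_of_le (s, r) (by dsimp only; omega) le_rfl

theorem deligneSubspace_le (p q : ℤ) : deligneSubspace W F p q ≤ I (p, q) := by
  have hconj : deligneConjPart W F p q ≤
      ⨆ (ab : ℤ × ℤ) (_ : ab.1 + ab.2 ≤ p + q ∧ (q ≤ ab.2 ∨ ab.1 < p)), I ab :=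
    sup_le ((hI.map_sigmaC_F_inf_W_le _ _).trans (biSup_mono fun ab hab => by omega))
      (iSup₂_le fun j _ => (hI.map_sigmaC_F_inf_W_le _ _).trans
        (biSup_mono fun ab hab => by omega))
  calc deligneSubspace W F p q
      ≤ (⨆ (ab : ℤ × ℤ) (_ : p ≤ ab.1 ∧ ab.1 + ab.2 ≤ p + q), I ab) ⊓
          ⨆ (ab : ℤ × ℤ) (_ : ab.1 + ab.2 ≤ p + q ∧ (q ≤ ab.2 ∨ ab.1 < p)), I ab :=
        inf_le_inf (hI.F_inf_W_eq p (p + q)).le hconj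
    _ = ⨆ (ab : ℤ × ℤ) (_ : (p ≤ ab.1 ∧ ab.1 + ab.2 ≤ p + q) ∧
          ab.1 + ab.2 ≤ p + q ∧ (q ≤ ab.2 ∨ ab.1 < p)), I ab :=
        hI.1.submodule_iSupIndep.biSup_inf_biSup _ _
    _ ≤ I (p, q) := iSup₂_le fun ab hab => (congrArg I (Prod.ext (by omega) (by omega))).le

theorem le_deligneSubspace (hW : ∃ a, ∀ n ≤ a, W n = ⊥) (p q : ℤ) :
    I (p, q) ≤ deligneSubspace W F p q := by
  obtain ⟨a, ha⟩ := hW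
  suffices h : ∀ k : ℕ, ∀ p q : ℤ, p + q ≤ a + k → I (p, q) ≤ deligneConjPart W F p q from
    le_inf (le_inf (hI.le_F p q) (hI.le_W p q)) (h (p + q - a).toNat p q (by omega))
  intro k
  induction k with
  | zero =>
    intro p q hpq
    refine (hI.le_W p q).trans ?_
    rw [ha _ (by omega), baseChange_bot]
    exact bot_le
  | succ k ih =>
    intro p q hpq
    refine le_sup_right.trans ((hI.lower_sup_eq p q).le.trans (sup_le ?_ (le_sup_of_le_left ?_)))
    · exact iSup₂_le fun ⟨r, s⟩ ⟨hr, hs⟩ => ((ih r s (by dsimp only at hr hs; omega)).trans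
        (deligneConjPart_le_deligneTail hI.antitone_F hr hs)).trans le_sup_right
    · rw [← map_sigmaC_baseChange, ← map_sigmaC_inf]
      exact map_mono (le_inf (hI.le_F q p) (add_comm q p ▸ hI.le_W q p))

end IsDeligneSplitting

theorem deligne_splitting_functorial_general (V V' : Type*)
    [AddCommGroup V] [Module ℝ V]
    [AddCommGroup V'] [Module ℝ V']
    (W : ℤ → Submodule ℝ V) (F : ℤ → Submodule ℂ (ℂ ⊗[ℝ] V))
    (W' : ℤ → Submodule ℝ V') (F' : ℤ → Submodule ℂ (ℂ ⊗[ℝ] V'))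
    (hWF : IsMixedHodgeStructure V W F)
    (f : V →ₗ[ℝ] V')
    (hfW : ∀ n : ℤ, (W n).map f ≤ W' n)
    (hfF : ∀ p : ℤ, (F p).map (f.baseChange ℂ) ≤ F' p)
    (I : ℤ × ℤ → Submodule ℂ (ℂ ⊗[ℝ] V)) (I' : ℤ × ℤ → Submodule ℂ (ℂ ⊗[ℝ] V'))
    (hI : IsDeligneSplitting V W F I) (hI' : IsDeligneSplitting V' W' F' I') :
    ∀ p q : ℤ, (I (p, q)).map (f.baseChange ℂ) ≤ I' (p, q) := fun p q =>
  calc (I (p, q)).map (f.baseChange ℂ)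
      ≤ (deligneSubspace W F p q).map (f.baseChange ℂ) :=
        map_mono (hI.le_deligneSubspace hWF.2.1 p q)
    _ ≤ deligneSubspace W' F' p q := map_deligneSubspace_le f hfW hfF p q
    _ ≤ I' (p, q) := hI'.deligneSubspace_le p q

/-- functoriality of the Deligne splitting. If `f` is a morphism of mixed
Hodge structures `(V, W, F) → (V', W', F')` and `I`, `I'` are the Deligne splittings of
`V_ℂ` and `V'_ℂ`, then `f_ℂ(I^{p,q}) ⊆ I'^{p,q}` for all `(p, q)`. -/
theorem deligne_splitting_functorial (V V' : Type*)
    [AddCommGroup V] [Module ℝ V] [FiniteDimensional ℝ V]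
    [AddCommGroup V'] [Module ℝ V'] [FiniteDimensional ℝ V']
    (W : ℤ → Submodule ℝ V) (F : ℤ → Submodule ℂ (ℂ ⊗[ℝ] V))
    (W' : ℤ → Submodule ℝ V') (F' : ℤ → Submodule ℂ (ℂ ⊗[ℝ] V'))
    (hWF : IsMixedHodgeStructure V W F) (hWF' : IsMixedHodgeStructure V' W' F')
    (f : V →ₗ[ℝ] V')
    (hfW : ∀ n : ℤ, (W n).map f ≤ W' n)
    (hfF : ∀ p : ℤ, (F p).map (f.baseChange ℂ) ≤ F' p)
    (I : ℤ × ℤ → Submodule ℂ (ℂ ⊗[ℝ] V)) (I' : ℤ × ℤ → Submodule ℂ (ℂ ⊗[ℝ] V'))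
    (hI : IsDeligneSplitting V W F I) (hI' : IsDeligneSplitting V' W' F' I') :
    ∀ p q : ℤ, (I (p, q)).map (f.baseChange ℂ) ≤ I' (p, q) :=
  deligne_splitting_functorial_general V V' W F W' F' hWF f hfW hfF I I' hI hI'
end

section
/- Strict compatibility with the Hodge filtration: every morphism f : (V, W, F) → (V', W', F') of mixed Hodge structures is strictly compatible with the Hodge filtrations, i.e. f_ℂ(F^p) = range(f_ℂ) ∩ F'^p for every integer p, where f_ℂ := id_ℂ ⊗ f. -/
open scoped TensorProduct

/-!
For three opposed filtrations `W`, `F`, `Fbar` (in a mixed Hodge structure `Fbar` is the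
conjugate of `F`), Deligne's subspaces
`I^{p,q} = F^p ∩ W_{p+q} ∩ (Fbar^q ∩ W_{p+q} + ∑_{j ≥ 1} Fbar^{q-j} ∩ W_{p+q-j-1})`
span the whole space, lie in `F^p`, are carried into `I'^{p,q}` by every morphism, and the sum of
those with `r < p` meets `F^p` trivially. So if `f x ∈ F'^p`, write `x = y + z` with `y` in the sum
of the `I^{r,s}` with `r ≥ p` and `z` in the sum of those with `r < p`: then `y ∈ F^p`, and
`f z = f x - f y` lies in `F'^p` and in the sum of the `I'^{r,s}` with `r < p`, so `f x = f y`.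

Both properties of the `I^{p,q}` are proved by induction on the weight, from the Hodge
decomposition `Gr^W_m = ⊕_p F^p ∩ Fbar^{m-p}` on each graded piece; all of it is modular-lattice
algebra on preimages in `W_m` of subspaces of `Gr^W_m`.
-/

theorem Int.forall_of_forall_le_of_sub_one {P : ℤ → Prop} (a : ℤ) (base : ∀ n ≤ a, P n)
    (step : ∀ n, P (n - 1) → P n) (n : ℤ) : P n := by
  induction n using Int.inductionOn' (b := a) with
  | zero => exact base a le_rfl
  | succ k _ ih => exact step (k + 1) (by simpa using ih)
  | pred k hk _ => exact base (k - 1) (by omega)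

namespace MixedHodge

section Lattice

variable {α : Type*} [CompleteLattice α] {W F Fbar : ℤ → α}

/-- The preimage in `W m` of the filtration that `F` induces on `Gr^W_m = W m / W (m - 1)`;
all statements about `Gr^W_m` are made on such preimages, so no quotient is ever formed. -/
def grFil (W F : ℤ → α) (m p : ℤ) : α := F p ⊓ W m ⊔ W (m - 1)

/-- Deligne's three opposed filtrations: the last two fields say that `F` and `Fbar` induce
`m`-opposed filtrations on `Gr^W_m`. -/
structure AreOpposed (W F Fbar : ℤ → α) : Prop where
  monotone_W : Monotone W
  antitone_F : Antitone F
  antitone_Fbar : Antitone Fbar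
  exists_W_eq_bot : ∃ a, ∀ n ≤ a, W n = ⊥
  exists_F_eq_top : ∃ a, ∀ p ≤ a, F p = ⊤
  exists_F_eq_bot : ∃ b, ∀ p ≥ b, F p = ⊥
  exists_Fbar_eq_bot : ∃ b, ∀ q ≥ b, Fbar q = ⊥
  grFil_inf_grFil : ∀ m p q, p + q = m + 1 → grFil W F m p ⊓ grFil W Fbar m q = W (m - 1)
  grFil_sup_grFil : ∀ m p q, p + q = m + 1 → grFil W F m p ⊔ grFil W Fbar m q = W m

theorem grFil_le (hW : Monotone W) (m p : ℤ) : grFil W F m p ≤ W m :=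
  sup_le inf_le_right (hW (by omega))

theorem grFil_antitone (hF : Antitone F) (m : ℤ) : Antitone (grFil W F m) :=
  fun _ _ hpq => sup_le_sup_right (inf_le_inf_right _ (hF hpq)) _

/-- The second factor of Deligne's `I^{p,m-p}`, with the summation index `j` shifted by one. -/
def deligneBar (W Fbar : ℤ → α) (m p : ℤ) : α :=
  Fbar (m - p) ⊓ W m ⊔ ⨆ j : ℕ, Fbar (m - p - j - 1) ⊓ W (m - j - 2)

/-- Deligne's splitting `I^{p,q}` of a mixed Hodge structure, indexed by the weight `m = p + q`
and by `p`. -/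
def deligneI (W F Fbar : ℤ → α) (m p : ℤ) : α := F p ⊓ W m ⊓ deligneBar W Fbar m p

def deligneSum (W F Fbar : ℤ → α) (P : ℤ → ℤ → Prop) : α :=
  ⨆ (m) (p) (_ : P m p), deligneI W F Fbar m p

theorem inf_W_le_deligneBar (hW : Monotone W) (hFbar : Antitone Fbar) {m n p s : ℤ}
    (hn : n < m) (hs : n - s < p) : Fbar s ⊓ W n ≤ deligneBar W Fbar m p := by
  rcases eq_or_lt_of_le (Int.le_sub_one_of_lt hn) with rfl | hn
  · exact le_sup_of_le_left (inf_le_inf (hFbar (by omega)) (hW (by omega)))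
  · obtain ⟨j, hj⟩ : ∃ j : ℕ, (j : ℤ) = m - 2 - n := ⟨(m - 2 - n).toNat, by omega⟩
    refine le_sup_of_le_right (le_iSup_of_le j (inf_le_inf (hFbar (by omega)) ?_))
    rw [show m - j - 2 = n by omega]

theorem deligneBar_mono (hW : Monotone W) (hFbar : Antitone Fbar) {m m' p p' : ℤ}
    (hm : m' < m) (hp : p' < p) : deligneBar W Fbar m' p' ≤ deligneBar W Fbar m p :=
  sup_le (inf_W_le_deligneBar hW hFbar hm (by omega)) <|
    iSup_le fun _ => inf_W_le_deligneBar hW hFbar (by omega) (by omega)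

theorem deligneBar_le_Fbar_sup_W (hW : Monotone W) (hFbar : Antitone Fbar) (m p : ℤ) (i : ℕ) :
    deligneBar W Fbar m p ≤ Fbar (m - p - i) ⊔ W (m - i - 2) := by
  refine sup_le (le_sup_of_le_left (inf_le_left.trans (hFbar (by omega)))) (iSup_le fun j => ?_)
  rcases lt_or_ge j i with hj | hj
  · exact le_sup_of_le_left (inf_le_left.trans (hFbar (by omega)))
  · exact le_sup_of_le_right (inf_le_right.trans (hW (by omega)))

theorem deligneBar_le_grFil (hW : Monotone W) (m p : ℤ) :
    deligneBar W Fbar m p ≤ grFil W Fbar m (m - p) :=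
  sup_le le_sup_left (iSup_le fun _ => le_sup_of_le_right (inf_le_right.trans (hW (by omega))))

theorem deligneI_le_F (m p : ℤ) : deligneI W F Fbar m p ≤ F p :=
  inf_le_left.trans inf_le_left

theorem deligneI_le_W (m p : ℤ) : deligneI W F Fbar m p ≤ W m :=
  inf_le_left.trans inf_le_right

theorem deligneI_le_grFil (m p : ℤ) : deligneI W F Fbar m p ≤ grFil W F m p :=
  inf_le_left.trans le_sup_left

theorem deligneI_le_grFil_bar (hW : Monotone W) (m p : ℤ) :
    deligneI W F Fbar m p ≤ grFil W Fbar m (m - p) :=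
  inf_le_right.trans (deligneBar_le_grFil hW m p)

theorem deligneI_le_deligneSum {P : ℤ → ℤ → Prop} {m p : ℤ} (h : P m p) :
    deligneI W F Fbar m p ≤ deligneSum W F Fbar P :=
  le_iSup₂_of_le m p (le_iSup_of_le h le_rfl)

theorem deligneSum_le {P : ℤ → ℤ → Prop} {a : α}
    (h : ∀ m p, P m p → deligneI W F Fbar m p ≤ a) :
    deligneSum W F Fbar P ≤ a :=
  iSup₂_le fun m p => iSup_le (h m p)

theorem deligneSum_mono {P Q : ℤ → ℤ → Prop} (h : ∀ m p, P m p → Q m p) :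
    deligneSum W F Fbar P ≤ deligneSum W F Fbar Q :=
  deligneSum_le fun _ _ hP => deligneI_le_deligneSum (h _ _ hP)

theorem deligneSum_le_sup {P Q Q' : ℤ → ℤ → Prop}
    (h : ∀ m p, P m p → Q m p ∨ Q' m p) :
    deligneSum W F Fbar P ≤ deligneSum W F Fbar Q ⊔ deligneSum W F Fbar Q' :=
  deligneSum_le fun _ _ hP => (h _ _ hP).elim
    (fun hQ => le_sup_of_le_left (deligneI_le_deligneSum hQ))
    (fun hQ' => le_sup_of_le_right (deligneI_le_deligneSum hQ'))

theorem deligneSum_le_W (hW : Monotone W) {P : ℤ → ℤ → Prop} {n : ℤ}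
    (h : ∀ m p, P m p → m ≤ n) : deligneSum W F Fbar P ≤ W n :=
  deligneSum_le fun _ _ hP => (deligneI_le_W _ _).trans (hW (h _ _ hP))

theorem deligneSum_le_F (hF : Antitone F) {P : ℤ → ℤ → Prop} {p : ℤ}
    (h : ∀ m r, P m r → p ≤ r) : deligneSum W F Fbar P ≤ F p :=
  deligneSum_le fun _ _ hP => (deligneI_le_F _ _).trans (hF (h _ _ hP))

variable [IsModularLattice α]

theorem grFil_eq_inf_sup_grFil (h : AreOpposed W F Fbar) (m p : ℤ) :
    grFil W F m p = grFil W F m p ⊓ grFil W Fbar m (m - p) ⊔ grFil W F m (p + 1) :=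
  calc grFil W F m p = (grFil W F m (p + 1) ⊔ grFil W Fbar m (m - p)) ⊓ grFil W F m p := by
        rw [h.grFil_sup_grFil m (p + 1) (m - p) (by ring),
          inf_eq_right.mpr (grFil_le h.monotone_W m p)]
    _ = grFil W F m (p + 1) ⊔ grFil W Fbar m (m - p) ⊓ grFil W F m p :=
        sup_inf_assoc_of_le _ (grFil_antitone h.antitone_F m (by omega))
    _ = _ := by rw [inf_comm, sup_comm]

theorem W_le_iSup_inf_grFil (h : AreOpposed W F Fbar) (m : ℤ) :
    W m ≤ ⨆ p, grFil W F m p ⊓ grFil W Fbar m (m - p) := by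
  obtain ⟨a, ha⟩ := h.exists_F_eq_top
  obtain ⟨b, hb⟩ := h.exists_F_eq_bot
  have hbot {p : ℤ} (hp : b ≤ p) :
      grFil W F m p ≤ ⨆ p, grFil W F m p ⊓ grFil W Fbar m (m - p) := by
    refine le_iSup_of_le p (le_inf le_rfl ?_)
    rw [grFil, hb p hp, bot_inf_eq, bot_sup_eq]
    exact le_sup_right
  have hgrFil (p : ℤ) : grFil W F m p ≤ ⨆ p, grFil W F m p ⊓ grFil W Fbar m (m - p) := by
    induction p using Int.inductionOn' (b := b) with
    | zero => exact hbot le_rfl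
    | succ k hk _ => exact hbot (by omega)
    | pred k _ ih =>
      rw [grFil_eq_inf_sup_grFil h, sub_add_cancel]
      exact sup_le (le_iSup_of_le (k - 1) le_rfl) ih
  calc W m ≤ grFil W F m a := by simp [grFil, ha a le_rfl]
    _ ≤ _ := hgrFil a

theorem deligneI_inf_W_eq_bot (h : AreOpposed W F Fbar) (m p : ℤ) :
    deligneI W F Fbar m p ⊓ W (m - 1) = ⊥ := by
  obtain ⟨a, ha⟩ := h.exists_W_eq_bot
  have hdesc (i : ℕ) : deligneI W F Fbar m p ⊓ W (m - 1) ≤ W (m - 1 - i) := by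
    induction i with
    | zero => simp
    | succ i ih =>
      -- in `Gr^W_n` the element lies in `F^p` and in `Fbar^{m-p-i}`, which are `n`-opposed
      set n := m - 1 - i
      have hF : deligneI W F Fbar m p ⊓ W (m - 1) ≤ F p ⊓ W n :=
        le_inf (inf_le_left.trans (deligneI_le_F m p)) ih
      have hbar : deligneI W F Fbar m p ⊓ W (m - 1) ≤ W (n - 1) ⊔ Fbar (m - p - i) := by
        rw [sup_comm, show n - 1 = m - i - 2 by omega]
        exact inf_le_left.trans <| inf_le_right.trans <|
          deligneBar_le_Fbar_sup_W h.monotone_W h.antitone_Fbar m p i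
      have hFbar :
          deligneI W F Fbar m p ⊓ W (m - 1) ≤ Fbar (m - p - i) ⊓ W n ⊔ W (n - 1) :=
        calc _ ≤ (W (n - 1) ⊔ Fbar (m - p - i)) ⊓ W n := le_inf hbar ih
          _ = _ := by rw [sup_inf_assoc_of_le _ (h.monotone_W (by omega)), sup_comm]
      calc _ ≤ grFil W F n p ⊓ grFil W Fbar n (m - p - i) :=
            le_inf (hF.trans le_sup_left) hFbar
        _ = W (n - 1) := h.grFil_inf_grFil n p _ (by omega)
        _ = W (m - 1 - (i + 1 : ℕ)) := by congr 1; push_cast; omega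
  have := hdesc (m - 1 - a).toNat
  rwa [ha (m - 1 - (m - 1 - a).toNat) (by omega), le_bot_iff] at this

theorem deligneI_eq_bot (h : AreOpposed W F Fbar) {m p : ℤ} (hp : Fbar (m - p) = ⊥) :
    deligneI W F Fbar m p = ⊥ := by
  have hle := deligneI_le_grFil_bar (F := F) (Fbar := Fbar) h.monotone_W m p
  rw [grFil, hp, bot_inf_eq, bot_sup_eq] at hle
  rw [← deligneI_inf_W_eq_bot h m p, inf_eq_left.mpr hle]

theorem inf_grFil_le_deligneI_sup (h : AreOpposed W F Fbar) {m : ℤ}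
    (hW : W (m - 1) ≤ deligneSum W F Fbar fun n _ => n ≤ m - 1) (p : ℤ) :
    grFil W F m p ⊓ grFil W Fbar m (m - p) ≤ deligneI W F Fbar m p ⊔ W (m - 1) := by
  -- The `W (m - 1)`-discrepancy between the two representatives of an element splits into the
  -- `I^{r,s}` with `r ≥ p`, absorbed by `F^p ∩ W_m`, and those with `r < p`, absorbed by
  -- `deligneBar`.
  set B₁ := deligneSum W F Fbar fun n r => n ≤ m - 1 ∧ p ≤ r
  set B₂ := deligneSum W F Fbar fun n r => n ≤ m - 1 ∧ r < p
  have hB : W (m - 1) ≤ B₁ ⊔ B₂ :=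
    hW.trans (deligneSum_le_sup fun n r hn => (le_or_gt p r).imp (⟨hn, ·⟩) (⟨hn, ·⟩))
  have hB₁F : B₁ ≤ F p ⊓ W m :=
    le_inf (deligneSum_le_F h.antitone_F fun _ _ => And.right)
      (deligneSum_le_W h.monotone_W fun _ _ hn => by omega)
  have hB₁W : B₁ ≤ W (m - 1) := deligneSum_le_W h.monotone_W fun _ _ => And.left
  have hB₂ : B₂ ≤ deligneBar W Fbar m p := deligneSum_le fun n r hn =>
    inf_le_right.trans (deligneBar_mono h.monotone_W h.antitone_Fbar (by omega) hn.2)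
  calc (F p ⊓ W m ⊔ W (m - 1)) ⊓ (Fbar (m - p) ⊓ W m ⊔ W (m - 1))
      = W (m - 1) ⊔ F p ⊓ W m ⊓ (Fbar (m - p) ⊓ W m ⊔ W (m - 1)) := by
        rw [sup_comm, sup_inf_assoc_of_le _ le_sup_right]
    _ ≤ W (m - 1) ⊔ (B₁ ⊔ (Fbar (m - p) ⊓ W m ⊔ B₂)) ⊓ (F p ⊓ W m) := by
        refine sup_le_sup_left (le_inf (inf_le_right.trans (sup_le ?_ ?_)) inf_le_left) _
        · exact le_sup_of_le_right le_sup_left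
        · exact hB.trans (sup_le_sup_left le_sup_right _)
    _ = W (m - 1) ⊔ (B₁ ⊔ (Fbar (m - p) ⊓ W m ⊔ B₂) ⊓ (F p ⊓ W m)) := by
        rw [sup_inf_assoc_of_le _ hB₁F]
    _ ≤ deligneI W F Fbar m p ⊔ W (m - 1) := by
        refine sup_le le_sup_right (sup_le (hB₁W.trans le_sup_right) (le_sup_of_le_left ?_))
        rw [inf_comm]
        exact inf_le_inf_left _ (sup_le le_sup_left hB₂)

theorem W_le_deligneSum (h : AreOpposed W F Fbar) (m : ℤ) :
    W m ≤ deligneSum W F Fbar fun n _ => n ≤ m := by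
  obtain ⟨a, ha⟩ := h.exists_W_eq_bot
  induction m using Int.forall_of_forall_le_of_sub_one a with
  | base n hn => simp [ha n hn]
  | step m hW =>
    refine (W_le_iSup_inf_grFil h m).trans (iSup_le fun p => ?_)
    refine (inf_grFil_le_deligneI_sup h hW p).trans (sup_le (deligneI_le_deligneSum le_rfl) ?_)
    exact hW.trans (deligneSum_mono fun _ _ hn => by omega)

theorem grFil_inf_iSup_deligneI_eq_bot (h : AreOpposed W F Fbar) (m p : ℤ) :
    grFil W F m p ⊓ ⨆ (r) (_ : r < p), deligneI W F Fbar m r = ⊥ := by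
  obtain ⟨b, hb⟩ := h.exists_Fbar_eq_bot
  induction p using Int.forall_of_forall_le_of_sub_one (m - b + 1) with
  | base p hp =>
    rw [iSup₂_eq_bot.mpr fun r (hr : r < p) => deligneI_eq_bot h (hb _ (by omega)), inf_bot_eq]
  | step p ih =>
    set J := ⨆ (r) (_ : r < p - 1), deligneI W F Fbar m r
    have hJ : ⨆ (r) (_ : r < p), deligneI W F Fbar m r ≤ deligneI W F Fbar m (p - 1) ⊔ J := by
      refine iSup₂_le fun r hr => ?_
      rcases eq_or_lt_of_le (Int.le_sub_one_of_lt hr) with rfl | hr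
      · exact le_sup_left
      · exact le_sup_of_le_right (le_iSup₂_of_le r hr le_rfl)
    refine le_bot_iff.mp ?_
    calc _ ≤ grFil W F m p ⊓ ((deligneI W F Fbar m (p - 1) ⊔ J) ⊓ grFil W F m (p - 1)) :=
          le_inf inf_le_left (le_inf (inf_le_right.trans hJ)
            (inf_le_left.trans (grFil_antitone h.antitone_F m (by omega))))
      _ = grFil W F m p ⊓ deligneI W F Fbar m (p - 1) := by
          rw [sup_inf_assoc_of_le _ (deligneI_le_grFil m (p - 1)), inf_comm J, ih, sup_bot_eq]
      _ ≤ grFil W F m p ⊓ grFil W Fbar m (m - (p - 1)) ⊓ deligneI W F Fbar m (p - 1) :=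
          le_inf (inf_le_inf_left _ (deligneI_le_grFil_bar h.monotone_W m (p - 1))) inf_le_right
      _ = ⊥ := by
          rw [h.grFil_inf_grFil m p _ (by omega), inf_comm, deligneI_inf_W_eq_bot h]

theorem inf_deligneSum_eq_bot (h : AreOpposed W F Fbar) (m p : ℤ) :
    F p ⊓ (deligneSum W F Fbar fun n r => n ≤ m ∧ r < p) = ⊥ := by
  obtain ⟨a, ha⟩ := h.exists_W_eq_bot
  induction m using Int.forall_of_forall_le_of_sub_one a with
  | base m hm =>
    rw [← le_bot_iff, ← ha m hm]
    exact inf_le_right.trans (deligneSum_le_W h.monotone_W fun _ _ => And.left)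
  | step m ih =>
    set S := deligneSum W F Fbar fun n r => n ≤ m - 1 ∧ r < p
    set J := ⨆ (r) (_ : r < p), deligneI W F Fbar m r
    have hS : S ≤ grFil W F m p :=
      (deligneSum_le_W h.monotone_W fun _ _ => And.left).trans le_sup_right
    have hSJ : (deligneSum W F Fbar fun n r => n ≤ m ∧ r < p) ≤ S ⊔ J := by
      refine deligneSum_le fun n r hnr => ?_
      rcases eq_or_lt_of_le hnr.1 with rfl | hn
      · exact le_sup_of_le_right (le_iSup₂_of_le r hnr.2 le_rfl)
      · exact le_sup_of_le_left (deligneI_le_deligneSum ⟨by omega, hnr.2⟩)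
    refine le_bot_iff.mp (ih ▸ le_inf inf_le_left ?_)
    calc _ ≤ (S ⊔ J) ⊓ grFil W F m p :=
          le_inf (inf_le_right.trans hSJ) (le_sup_of_le_left (inf_le_inf_left _
            (deligneSum_le_W h.monotone_W fun _ _ => And.left)))
      _ = S := by
          rw [sup_inf_assoc_of_le _ hS, inf_comm, grFil_inf_iSup_deligneI_eq_bot h, sup_bot_eq]

end Lattice

section Module

variable {R M M' : Type*} [Ring R] [AddCommGroup M] [Module R M] [AddCommGroup M'] [Module R M']
  {W F Fbar : ℤ → Submodule R M} {W' F' Fbar' : ℤ → Submodule R M'} {f : M →ₗ[R] M'}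

theorem map_deligneI_le (hfW : ∀ n, (W n).map f ≤ W' n) (hfF : ∀ p, (F p).map f ≤ F' p)
    (hfFbar : ∀ q, (Fbar q).map f ≤ Fbar' q) (m p : ℤ) :
    (deligneI W F Fbar m p).map f ≤ deligneI W' F' Fbar' m p := by
  have hinf {A B : Submodule R M} {A' B' : Submodule R M'} (hA : A.map f ≤ A')
      (hB : B.map f ≤ B') : (A ⊓ B).map f ≤ A' ⊓ B' :=
    (Submodule.map_inf_le f).trans (inf_le_inf hA hB)
  refine hinf (hinf (hfF p) (hfW m)) ?_
  rw [deligneBar, Submodule.map_sup, Submodule.map_iSup]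
  exact sup_le_sup (hinf (hfFbar _) (hfW m)) (iSup_mono fun j => hinf (hfFbar _) (hfW _))

theorem map_deligneSum_le (hfW : ∀ n, (W n).map f ≤ W' n) (hfF : ∀ p, (F p).map f ≤ F' p)
    (hfFbar : ∀ q, (Fbar q).map f ≤ Fbar' q) (P : ℤ → ℤ → Prop) :
    (deligneSum W F Fbar P).map f ≤ deligneSum W' F' Fbar' P := by
  simp only [deligneSum, Submodule.map_iSup]
  exact iSup₂_mono fun m p => iSup_mono fun _ => map_deligneI_le hfW hfF hfFbar m p

theorem map_eq_range_inf (h : AreOpposed W F Fbar) (h' : AreOpposed W' F' Fbar') {n : ℤ}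
    (hn : W n = ⊤) (hfW : ∀ n, (W n).map f ≤ W' n) (hfF : ∀ p, (F p).map f ≤ F' p)
    (hfFbar : ∀ q, (Fbar q).map f ≤ Fbar' q) (p : ℤ) :
    (F p).map f = LinearMap.range f ⊓ F' p := by
  refine le_antisymm (le_inf LinearMap.map_le_range (hfF p)) ?_
  rintro _ ⟨⟨x, rfl⟩, hxF⟩
  have hsplit : W n ≤ (deligneSum W F Fbar fun m r => m ≤ n ∧ p ≤ r) ⊔
      deligneSum W F Fbar fun m r => m ≤ n ∧ r < p :=
    (W_le_deligneSum h n).trans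
      (deligneSum_le_sup fun m r hm => (le_or_gt p r).imp (⟨hm, ·⟩) (⟨hm, ·⟩))
  obtain ⟨y, hy, z, hz, rfl⟩ :=
    Submodule.mem_sup.mp (hsplit (hn ▸ Submodule.mem_top : x ∈ W n))
  have hyF : y ∈ F p := deligneSum_le_F h.antitone_F (fun _ _ => And.right) hy
  have hfz : f z ∈ F' p ⊓ deligneSum W' F' Fbar' fun m r => m ≤ n ∧ r < p := by
    refine ⟨?_, map_deligneSum_le hfW hfF hfFbar _ ⟨z, hz, rfl⟩⟩
    simpa using sub_mem hxF (hfF p ⟨y, hyF, rfl⟩)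
  rw [inf_deligneSum_eq_bot h', Submodule.mem_bot] at hfz
  exact ⟨y, hyF, by simp [hfz]⟩

end Module

section MixedHodgeStructure

variable {V V' : Type*} [AddCommGroup V] [Module ℝ V] [AddCommGroup V'] [Module ℝ V']

theorem sigmaC_involutive : Function.Involutive (sigmaC V) := by
  intro x
  induction x using TensorProduct.induction_on with
  | zero => simp
  | tmul z v => simp [sigmaC]
  | add x y hx hy => simp only [map_add, hx, hy]

theorem map_sigmaC_baseChange (p : Submodule ℝ V) :
    (p.baseChange ℂ).map (sigmaC V) = p.baseChange ℂ := by
  have hle (p : Submodule ℝ V) : (p.baseChange ℂ).map (sigmaC V) ≤ p.baseChange ℂ := by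
    nth_rw 1 [Submodule.baseChange_eq_span]
    rw [Submodule.map_span, Submodule.span_le]
    rintro _ ⟨_, ⟨v, hv, rfl⟩, rfl⟩
    simpa [sigmaC] using Submodule.tmul_mem_baseChange_of_mem (1 : ℂ) hv
  exact le_antisymm (hle p) fun x hx =>
    ⟨sigmaC V x, hle p ⟨x, hx, rfl⟩, sigmaC_involutive x⟩

theorem baseChange_sigmaC (f : V →ₗ[ℝ] V') (x : ℂ ⊗[ℝ] V) :
    f.baseChange ℂ (sigmaC V x) = sigmaC V' (f.baseChange ℂ x) := by
  induction x using TensorProduct.induction_on with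
  | zero => simp
  | tmul z v => simp [sigmaC]
  | add x y hx hy => simp only [map_add, hx, hy]

theorem map_baseChange_le {f : V →ₗ[ℝ] V'} {p : Submodule ℝ V} {q : Submodule ℝ V'}
    (h : p.map f ≤ q) : (p.baseChange ℂ).map (f.baseChange ℂ) ≤ q.baseChange ℂ := by
  rw [Submodule.baseChange_eq_span, Submodule.map_span, Submodule.span_le]
  rintro _ ⟨_, ⟨v, hv, rfl⟩, rfl⟩
  simpa using Submodule.tmul_mem_baseChange_of_mem (1 : ℂ) (h ⟨v, hv, rfl⟩)

theorem _root_.IsMixedHodgeStructure.areOpposed {W : ℤ → Submodule ℝ V}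
    {F : ℤ → Submodule ℂ (ℂ ⊗[ℝ] V)} (h : IsMixedHodgeStructure V W F) :
    AreOpposed (fun n => (W n).baseChange ℂ) F fun q => (F q).map (sigmaC V) := by
  obtain ⟨hW, ⟨a, ha⟩, -, hF, ⟨a', ha'⟩, ⟨b, hb⟩, hopp⟩ := h
  have hσ (q n : ℤ) : (F q ⊓ (W n).baseChange ℂ).map (sigmaC V) =
      (F q).map (sigmaC V) ⊓ (W n).baseChange ℂ := by
    rw [Submodule.map_inf _ sigmaC_involutive.injective, map_sigmaC_baseChange]
  have hF := antitone_int_of_succ_le hF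
  refine
    { monotone_W := fun m n hmn => Submodule.baseChange_mono ℂ (hW hmn)
      antitone_F := hF
      antitone_Fbar := fun p q hpq => Submodule.map_mono (hF hpq)
      exists_W_eq_bot := ⟨a, fun n hn => by simp [ha n hn]⟩
      exists_F_eq_top := ⟨a', ha'⟩
      exists_F_eq_bot := ⟨b, hb⟩
      exists_Fbar_eq_bot := ⟨b, fun q hq => by simp [hb q hq]⟩
      grFil_inf_grFil := fun m p q hpq => ?_
      grFil_sup_grFil := fun m p q hpq => ?_ }
  · obtain rfl : q = m - p + 1 := by omega
    simp only [grFil, ← hσ]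
    exact (hopp m p).1
  · obtain rfl : q = m - p + 1 := by omega
    simp only [grFil, ← hσ, ← sup_sup_distrib_right]
    exact (hopp m p).2

end MixedHodgeStructure

end MixedHodge

theorem mhs_morphism_strict_hodge_general (V V' : Type*)
    [AddCommGroup V] [Module ℝ V]
    [AddCommGroup V'] [Module ℝ V']
    (W : ℤ → Submodule ℝ V) (F : ℤ → Submodule ℂ (ℂ ⊗[ℝ] V))
    (W' : ℤ → Submodule ℝ V') (F' : ℤ → Submodule ℂ (ℂ ⊗[ℝ] V'))
    (hWF : IsMixedHodgeStructure V W F) (hWF' : IsMixedHodgeStructure V' W' F')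
    (f : V →ₗ[ℝ] V')
    (hfW : ∀ n : ℤ, (W n).map f ≤ W' n)
    (hfF : ∀ p : ℤ, (F p).map (f.baseChange ℂ) ≤ F' p) :
    ∀ p : ℤ, (F p).map (f.baseChange ℂ) = LinearMap.range (f.baseChange ℂ) ⊓ F' p := by
  obtain ⟨b, hb⟩ : ∃ b, ∀ n ≥ b, W n = ⊤ := hWF.2.2.1
  have hfFbar (q : ℤ) :
      ((F q).map (sigmaC V)).map (f.baseChange ℂ) ≤ (F' q).map (sigmaC V') := by
    rintro _ ⟨_, ⟨x, hx, rfl⟩, rfl⟩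
    exact ⟨f.baseChange ℂ x, hfF q ⟨x, hx, rfl⟩, (MixedHodge.baseChange_sigmaC f x).symm⟩
  exact MixedHodge.map_eq_range_inf hWF.areOpposed hWF'.areOpposed (n := b)
    (by rw [hb b le_rfl, Submodule.baseChange_top])
    (fun n => MixedHodge.map_baseChange_le (hfW n)) hfF hfFbar

/-- Every morphism of mixed Hodge structures is strictly compatible with
the Hodge filtrations: `f_ℂ(F^p) = range(f_ℂ) ⊓ F'^p` for every `p`. -/
theorem mhs_morphism_strict_hodge (V V' : Type*)
    [AddCommGroup V] [Module ℝ V] [FiniteDimensional ℝ V]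
    [AddCommGroup V'] [Module ℝ V'] [FiniteDimensional ℝ V']
    (W : ℤ → Submodule ℝ V) (F : ℤ → Submodule ℂ (ℂ ⊗[ℝ] V))
    (W' : ℤ → Submodule ℝ V') (F' : ℤ → Submodule ℂ (ℂ ⊗[ℝ] V'))
    (hWF : IsMixedHodgeStructure V W F) (hWF' : IsMixedHodgeStructure V' W' F')
    (f : V →ₗ[ℝ] V')
    (hfW : ∀ n : ℤ, (W n).map f ≤ W' n)
    (hfF : ∀ p : ℤ, (F p).map (f.baseChange ℂ) ≤ F' p) :
    ∀ p : ℤ, (F p).map (f.baseChange ℂ) = LinearMap.range (f.baseChange ℂ) ⊓ F' p :=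
  mhs_morphism_strict_hodge_general V V' W F W' F' hWF hWF' f hfW hfF
end
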